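/- Let h : ℝ → ℝ be Lipschitz with constant L, and define φ(x,t) = inf_{y ∈ ℝ} [ (x−y)²/(2t) + h(y) ] for t > 0. Then x ↦ φ(x,t) is Lipschitz with constant L for each fixed t > 0, and at every point (x₀,t₀) with t₀ > 0 at which φ is (totally) differentiable, the Hamilton–Jacobi equation ∂_t φ(x₀,t₀) + (1/2)(∂_x φ(x₀,t₀))² = 0 holds. -/

import Mathlib

/-!
Translating a competitor `y` for `x₂` into the competitor `y + (x₁ - x₂)` for `x₁` shows that
`φ(·, t)` inherits the Lipschitz constant of `h`.

For the Hamilton–Jacobi equation, write `p = ∂ₓφ` and `b = ∂ₜφ` at `(x, t)`. Since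
`(x, t) ↦ (x - y)² / (2t)` is convex, `φ(x + τq, t + τ) ≤ φ(x, t) + τq²/2` for every slope `q`
and `τ ≥ 0`, so `qp + b ≤ q²/2`; with `q = p` this gives `b ≤ -p²/2`. Conversely the infimum is
attained at some `z`, and along the backward characteristic through `(x, t)` and `(z, 0)`, of
slope `q = (x - z)/t`, `φ` decreases at least at rate `q²/2`, so `qp + b ≥ q²/2` and hence
`b ≥ q²/2 - qp ≥ -p²/2`.
-/

open Filter Topology

theorem HasFDerivAt.le_of_eventually_le_add_mul {E : Type*} [NormedAddCommGroup E]
    [NormedSpace ℝ E] {f : E → ℝ} {f' : E →L[ℝ] ℝ} {a v : E} {c : ℝ} (hf : HasFDerivAt f f' a)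
    (hle : ∀ᶠ τ in 𝓝[>] (0 : ℝ), f (a + τ • v) ≤ f a + τ * c) : f' v ≤ c := by
  have hline : HasDerivAt (fun τ : ℝ => f (a + τ • v)) (f' v) 0 := by
    have hray : HasDerivAt (fun τ : ℝ => a + τ • v) v 0 := by
      simpa using ((hasDerivAt_id (0 : ℝ)).smul_const v).const_add a
    exact (by simpa using hf : HasFDerivAt f f' (a + (0 : ℝ) • v)).comp_hasDerivAt 0 hray
  refine le_of_tendsto hline.tendsto_slope_zero_right ?_
  filter_upwards [hle, self_mem_nhdsWithin] with τ hτ (hτ0 : 0 < τ)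
  rw [smul_eq_mul, inv_mul_le_iff₀ hτ0]
  simp only [zero_add, zero_smul, add_zero]
  linarith

theorem hamiltonJacobi_of_hasFDerivAt {Φ : ℝ × ℝ → ℝ} {D : ℝ × ℝ →L[ℝ] ℝ} {x t : ℝ}
    (hD : HasFDerivAt Φ D (x, t))
    (hforward : ∀ q, ∀ᶠ τ in 𝓝[>] (0 : ℝ), Φ (x + τ * q, t + τ) ≤ Φ (x, t) + τ * (q ^ 2 / 2))
    (hbackward : ∃ q, ∀ᶠ τ in 𝓝[>] (0 : ℝ),
      Φ (x - τ * q, t - τ) ≤ Φ (x, t) - τ * (q ^ 2 / 2)) :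
    D (0, 1) + 1 / 2 * D (1, 0) ^ 2 = 0 := by
  have hD_apply : ∀ a b : ℝ, D (a, b) = a * D (1, 0) + b * D (0, 1) := by
    intro a b
    rw [← smul_eq_mul, ← smul_eq_mul, ← map_smul, ← map_smul, ← map_add]
    simp
  have hsub : ∀ q, q * D (1, 0) + D (0, 1) ≤ q ^ 2 / 2 := fun q => by
    have := hD.le_of_eventually_le_add_mul (v := (q, 1)) (c := q ^ 2 / 2)
      (by simpa using hforward q)
    rwa [hD_apply, one_mul] at this
  obtain ⟨q, hq⟩ := hbackward
  have hsuper : q ^ 2 / 2 ≤ q * D (1, 0) + D (0, 1) := by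
    have := hD.le_of_eventually_le_add_mul (v := (-q, -1)) (c := -(q ^ 2 / 2))
      (by simpa [sub_eq_add_neg] using hq)
    rw [hD_apply] at this
    linarith
  nlinarith [hsub (D (1, 0)), sq_nonneg (q - D (1, 0))]

noncomputable def hopfLax (h : ℝ → ℝ) (x t : ℝ) : ℝ :=
  ⨅ y : ℝ, ((x - y) ^ 2 / (2 * t) + h y)

section HopfLax

variable {h : ℝ → ℝ} {L : NNReal} {x t : ℝ}

theorem LipschitzWith.sub_le_hopfLax_integrand (hLip : LipschitzWith L h) (ht : 0 < t)
    (y : ℝ) : h x - L ^ 2 * t / 2 ≤ (x - y) ^ 2 / (2 * t) + h y := by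
  have hh : h x ≤ h y + L * |x - y| := by simpa [Real.dist_eq] using hLip.le_add_mul x y
  have hamgm : L * |x - y| - L ^ 2 * t / 2 ≤ (x - y) ^ 2 / (2 * t) := by
    rw [le_div_iff₀ (by positivity), ← sq_abs (x - y)]
    nlinarith [sq_nonneg (|x - y| - L * t)]
  linarith

theorem LipschitzWith.le_hopfLax_integrand_of_le_abs (hLip : LipschitzWith L h) (ht : 0 < t)
    {y : ℝ} (hy : 2 * L * t ≤ |x - y|) : h x ≤ (x - y) ^ 2 / (2 * t) + h y := by
  have hh : h x ≤ h y + L * |x - y| := by simpa [Real.dist_eq] using hLip.le_add_mul x y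
  have hfar : L * |x - y| ≤ (x - y) ^ 2 / (2 * t) := by
    rw [le_div_iff₀ (by positivity), ← sq_abs (x - y)]
    nlinarith [abs_nonneg (x - y)]
  linarith

theorem LipschitzWith.bddBelow_hopfLax_integrand (hLip : LipschitzWith L h) (ht : 0 < t) :
    BddBelow (Set.range fun y => (x - y) ^ 2 / (2 * t) + h y) :=
  ⟨_, Set.forall_mem_range.2 (hLip.sub_le_hopfLax_integrand ht)⟩

theorem LipschitzWith.hopfLax_le (hLip : LipschitzWith L h) (ht : 0 < t) (y : ℝ) :
    hopfLax h x t ≤ (x - y) ^ 2 / (2 * t) + h y :=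
  ciInf_le (hLip.bddBelow_hopfLax_integrand ht) y

theorem LipschitzWith.exists_hopfLax_eq (hLip : LipschitzWith L h) (ht : 0 < t) :
    ∃ z, hopfLax h x t = (x - z) ^ 2 / (2 * t) + h z := by
  have hcont : Continuous fun y => (x - y) ^ 2 / (2 * t) + h y :=
    (by fun_prop : Continuous fun y : ℝ => (x - y) ^ 2 / (2 * t)).add hLip.continuous
  have hcoercive :
      ∀ᶠ y in cocompact ℝ, (x - x) ^ 2 / (2 * t) + h x ≤ (x - y) ^ 2 / (2 * t) + h y := by
    filter_upwards [(isCompact_closedBall x (2 * L * t)).compl_mem_cocompact] with y hy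
    rw [Set.mem_compl_iff, Metric.mem_closedBall, not_le, Real.dist_eq, abs_sub_comm] at hy
    simpa using hLip.le_hopfLax_integrand_of_le_abs ht hy.le
  obtain ⟨z, hz⟩ := hcont.exists_forall_le' x hcoercive
  exact ⟨z, le_antisymm (hLip.hopfLax_le ht z) (le_ciInf hz)⟩

theorem LipschitzWith.hopfLax_le_add_mul_dist (hLip : LipschitzWith L h) (ht : 0 < t)
    (x₁ x₂ : ℝ) : hopfLax h x₁ t ≤ hopfLax h x₂ t + L * dist x₁ x₂ := by
  rw [← sub_le_iff_le_add]
  refine le_ciInf fun y => sub_le_iff_le_add.2 ?_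
  calc hopfLax h x₁ t ≤ (x₁ - (y + (x₁ - x₂))) ^ 2 / (2 * t) + h (y + (x₁ - x₂)) :=
        hLip.hopfLax_le ht _
    _ ≤ (x₂ - y) ^ 2 / (2 * t) + (h y + L * dist x₁ x₂) := by
        gcongr ?_ + ?_
        · exact le_of_eq (by ring)
        · simpa [Real.dist_eq] using hLip.le_add_mul (y + (x₁ - x₂)) y
    _ = _ := by ring

theorem LipschitzWith.lipschitzWith_hopfLax (hLip : LipschitzWith L h) (ht : 0 < t) :
    LipschitzWith L (hopfLax h · t) :=
  LipschitzWith.of_le_add_mul L (hLip.hopfLax_le_add_mul_dist ht)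

theorem LipschitzWith.hopfLax_add_le (hLip : LipschitzWith L h) (ht : 0 < t)
    {τ : ℝ} (hτ : 0 ≤ τ) (q : ℝ) :
    hopfLax h (x + τ * q) (t + τ) ≤ hopfLax h x t + τ * (q ^ 2 / 2) := by
  rw [← sub_le_iff_le_add]
  refine le_ciInf fun y => sub_le_iff_le_add.2 ?_
  have hconvex : (x + τ * q - y) ^ 2 / (2 * (t + τ)) ≤ (x - y) ^ 2 / (2 * t) + τ * (q ^ 2 / 2) := by
    have hgap : (x - y) ^ 2 / (2 * t) + τ * (q ^ 2 / 2) - (x + τ * q - y) ^ 2 / (2 * (t + τ)) =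
        τ * (x - y - t * q) ^ 2 / (2 * t * (t + τ)) := by
      field_simp
      ring
    have : 0 ≤ τ * (x - y - t * q) ^ 2 / (2 * t * (t + τ)) := by positivity
    linarith
  linarith [hLip.hopfLax_le (x := x + τ * q) (by linarith : 0 < t + τ) y]

theorem LipschitzWith.hopfLax_sub_le_of_eq (hLip : LipschitzWith L h) {z τ : ℝ} (ht : 0 < t)
    (hz : hopfLax h x t = (x - z) ^ 2 / (2 * t) + h z) (hτ : τ < t) :
    hopfLax h (x - τ * ((x - z) / t)) (t - τ) ≤ hopfLax h x t - τ * (((x - z) / t) ^ 2 / 2) := by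
  have hle := hLip.hopfLax_le (x := x - τ * ((x - z) / t)) (sub_pos.2 hτ) z
  have ht0 : t ≠ 0 := ht.ne'
  have hτt : t - τ ≠ 0 := (sub_pos.2 hτ).ne'
  rw [hz]
  convert hle using 2
  field_simp
  ring

end HopfLax

theorem hopfLax_lipschitz_and_solves_HJ (h : ℝ → ℝ) (L : NNReal) (hLip : LipschitzWith L h) :
    (∀ t : ℝ, 0 < t →
      LipschitzWith L (fun x : ℝ => ⨅ y : ℝ, ((x - y) ^ 2 / (2 * t) + h y))) ∧
    (∀ (x₀ t₀ : ℝ) (D : ℝ × ℝ →L[ℝ] ℝ), 0 < t₀ →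
      HasFDerivAt (fun p : ℝ × ℝ => ⨅ y : ℝ, ((p.1 - y) ^ 2 / (2 * p.2) + h y)) D (x₀, t₀) →
      D (0, 1) + (1 / 2) * (D (1, 0)) ^ 2 = 0) := by
  refine ⟨fun t ht => hLip.lipschitzWith_hopfLax ht, fun x₀ t₀ D ht₀ hD => ?_⟩
  change HasFDerivAt (fun p : ℝ × ℝ => hopfLax h p.1 p.2) D (x₀, t₀) at hD
  refine hamiltonJacobi_of_hasFDerivAt hD (fun q => ?_) ?_
  · filter_upwards [self_mem_nhdsWithin] with τ (hτ : 0 < τ)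
    exact hLip.hopfLax_add_le ht₀ hτ.le q
  · obtain ⟨z, hz⟩ := hLip.exists_hopfLax_eq (x := x₀) ht₀
    refine ⟨(x₀ - z) / t₀, ?_⟩
    filter_upwards [Ioo_mem_nhdsGT ht₀] with τ hτ
    exact hLip.hopfLax_sub_le_of_eq ht₀ hz hτ.2
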